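/- Let x, x′ ∈ ℚ^{2(g+1)} be linearly independent vectors, each with a_1-coordinate equal to 1, with pr₂(x) ≠ 0, and let u ∈ H₂ satisfy ω(x,u) = ω(x′,u) = 1. Then the orthogonal complement {z ∈ ℚ^{2(g+1)} : ω(z,x) = ω(z,x′) = ω(z,b_1) = 0} is the internal direct sum of the subspace {z ∈ H₂ : ω(z,pr₂(x)) = ω(z,pr₂(x′)) = 0} and the line ℚ·(b_1 − u). -/

import Mathlib

namespace Paper

/-- The standard symplectic form on `R^{2g}` with respect to the basis
`a_1, b_1, …, a_g, b_g` (coordinates `2i, 2i+1` for `a_{i+1}, b_{i+1}`). -/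
def symp {R : Type*} [CommRing R] {g : ℕ} (x y : Fin (2 * g) → R) : R :=
  ∑ i : Fin g,
    (x ⟨2 * i.1, by omega⟩ * y ⟨2 * i.1 + 1, by omega⟩ -
      x ⟨2 * i.1 + 1, by omega⟩ * y ⟨2 * i.1, by omega⟩)

theorem symp_add_left {R : Type*} [CommRing R] {g : ℕ} (x y a : Fin (2 * g) → R) :
    symp (x + y) a = symp x a + symp y a := by
  unfold symp
  rw [← Finset.sum_add_distrib]
  exact Finset.sum_congr rfl fun i _ => by simp only [Pi.add_apply]; ring

theorem symp_smul_left {R : Type*} [CommRing R] {g : ℕ} (c : R) (x a : Fin (2 * g) → R) :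
    symp (c • x) a = c * symp x a := by
  unfold symp
  rw [Finset.mul_sum]
  exact Finset.sum_congr rfl fun i _ => by simp only [Pi.smul_apply, smul_eq_mul]; ring

theorem symp_zero_left {R : Type*} [CommRing R] {g : ℕ} (a : Fin (2 * g) → R) :
    symp (0 : Fin (2 * g) → R) a = 0 := by
  unfold symp; simp

/-- The orthogonal complement `A^⊥ = {x | ω(x,a) = 0 for all a ∈ A}`. -/
def perp {R : Type*} [CommRing R] {g : ℕ} (A : Set (Fin (2 * g) → R)) :
    Submodule R (Fin (2 * g) → R) where
  carrier := {x | ∀ a ∈ A, symp x a = 0}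
  add_mem' := by
    intro x y hx hy a ha
    rw [symp_add_left, hx a ha, hy a ha, add_zero]
  zero_mem' := by
    intro a ha
    exact symp_zero_left a
  smul_mem' := by
    intro c x hx a ha
    rw [symp_smul_left, hx a ha, mul_zero]

/-- The submodule of vectors whose first `m` coordinates vanish.
`H_k = coordZero R (2*g) (2*(k-1))`, and `H₂ = coordZero R (2*(g+1)) 2`. -/
def coordZero (R : Type*) [CommRing R] (n m : ℕ) : Submodule R (Fin n → R) where
  carrier := {v | ∀ j : Fin n, (j : ℕ) < m → v j = 0}
  add_mem' := by
    intro x y hx hy j hj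
    have h1 := hx j hj
    have h2 := hy j hj
    simp [Pi.add_apply, h1, h2]
  zero_mem' := by intro j hj; rfl
  smul_mem' := by
    intro c x hx j hj
    have h1 := hx j hj
    simp [Pi.smul_apply, h1]

/-- The standard basis vector `a_{i+1}` (`i` is 0-indexed). -/
def stdA (R : Type*) [CommRing R] (g i : ℕ) : Fin (2 * g) → R :=
  fun j => if (j : ℕ) = 2 * i then 1 else 0

/-- The standard basis vector `b_{i+1}` (`i` is 0-indexed). -/
def stdB (R : Type*) [CommRing R] (g i : ℕ) : Fin (2 * g) → R :=
  fun j => if (j : ℕ) = 2 * i + 1 then 1 else 0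

/-- Regard an integer vector as a rational vector. -/
def qcast {n : ℕ} (v : Fin n → ℤ) : Fin n → ℚ := fun j => (v j : ℚ)

/-- The projection `pr₂` deleting the `a_1`- and `b_1`-coordinates. -/
def pr2 {R : Type*} [CommRing R] {n : ℕ} (v : Fin n → R) : Fin n → R :=
  fun j => if (j : ℕ) < 2 then 0 else v j

/-- `gcd(v_1, …, v_m) = 1`: the vectors are linearly independent and their
ℤ-span is a direct summand. -/
def IsUnimodular {n m : ℕ} (v : Fin m → Fin n → ℤ) : Prop :=
  LinearIndependent ℤ v ∧
    ∃ C : Submodule ℤ (Fin n → ℤ), IsCompl (Submodule.span ℤ (Set.range v)) C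

/-- A primitive vector. -/
def Primitive {n : ℕ} (v : Fin n → ℤ) : Prop := IsUnimodular ![v]

/-- The entries of `w` are pairwise `ω`-orthogonal. -/
def PairwiseOrth {g m : ℕ} (w : Fin m → Fin (2 * g) → ℤ) : Prop :=
  ∀ i j, i ≠ j → symp (w i) (w j) = 0

/-- `Λ³ W`: the span of all wedges of three vectors from `W` inside the
exterior algebra. -/
def wedge3 {g : ℕ} (W : Submodule ℚ (Fin (2 * g) → ℚ)) :
    Submodule ℚ (ExteriorAlgebra ℚ (Fin (2 * g) → ℚ)) :=
  Submodule.span ℚ {x | ∃ z₁ ∈ W, ∃ z₂ ∈ W, ∃ z₃ ∈ W,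
    x = ExteriorAlgebra.ι ℚ z₁ * ExteriorAlgebra.ι ℚ z₂ * ExteriorAlgebra.ι ℚ z₃}

/-- `u ∧ Λ² W`. -/
def uWedge2 {g : ℕ} (u : Fin (2 * g) → ℚ) (W : Submodule ℚ (Fin (2 * g) → ℚ)) :
    Submodule ℚ (ExteriorAlgebra ℚ (Fin (2 * g) → ℚ)) :=
  Submodule.span ℚ {x | ∃ z₁ ∈ W, ∃ z₂ ∈ W,
    x = ExteriorAlgebra.ι ℚ u * ExteriorAlgebra.ι ℚ z₁ * ExteriorAlgebra.ι ℚ z₂}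

/-- `u ∧ u' ∧ W`. -/
def uuWedge1 {g : ℕ} (u u' : Fin (2 * g) → ℚ) (W : Submodule ℚ (Fin (2 * g) → ℚ)) :
    Submodule ℚ (ExteriorAlgebra ℚ (Fin (2 * g) → ℚ)) :=
  Submodule.span ℚ {x | ∃ z ∈ W,
    x = ExteriorAlgebra.ι ℚ u * ExteriorAlgebra.ι ℚ u' * ExteriorAlgebra.ι ℚ z}

/-- The simplicial differential: on the summand indexed by `w` it sends `z` to
`Σ_j (-1)^j · z` placed in the summand indexed by `∂_j w`. -/
noncomputable def diff (g p : ℕ)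
    (ξ : (Fin (p + 1) → Fin (2 * g) → ℤ) →₀ ExteriorAlgebra ℚ (Fin (2 * g) → ℚ)) :
    (Fin p → Fin (2 * g) → ℤ) →₀ ExteriorAlgebra ℚ (Fin (2 * g) → ℚ) :=
  ξ.sum fun w z =>
    ∑ j : Fin (p + 1), ((-1 : ℚ) ^ (j : ℕ)) • Finsupp.single (fun i => w (j.succAbove i)) z

/-- The gcd of the determinants of all maximal square submatrices of the matrix
whose columns are the `v i`. -/
def vgcd {ι : Type*} [Fintype ι] {m : ℕ} (v : Fin m → ι → ℤ) : ℕ :=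
  Finset.univ.gcd fun r : Fin m → ι => (Matrix.det (Matrix.of fun i j => v j (r i))).natAbs

end Paper

/-! Since `b₁ - u` lies in `⟨x, x', b₁⟩^⊥` and has `b₁`-coordinate `1`, subtracting the right
multiple of it splits any `z ∈ ⟨x, x', b₁⟩^⊥` off into a vector with vanishing `b₁`-coordinate.
Its `a₁`-coordinate is `ω(z, b₁) = 0` as well, so it lies in `H₂`, where pairing against `x` or
against `pr₂ x` is the same. -/

namespace Submodule

theorem eq_inf_ker_sup_span_singleton_and_disjoint {R V : Type*} [CommRing R]
    [AddCommGroup V] [Module R V] {P : Submodule R V} (f : V →ₗ[R] R) {v : V} (hvP : v ∈ P)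
    (hfv : f v = 1) :
    P = (P ⊓ LinearMap.ker f) ⊔ span R {v} ∧ Disjoint (P ⊓ LinearMap.ker f) (span R {v}) := by
  refine ⟨le_antisymm (fun z hz => ?_)
    (sup_le inf_le_left ((span_singleton_le_iff_mem _ _).mpr hvP)), ?_⟩
  · have hproj : z - f z • v ∈ P ⊓ LinearMap.ker f :=
      ⟨P.sub_mem hz (P.smul_mem _ hvP), by simp [hfv]⟩
    exact mem_sup.mpr ⟨_, hproj, f z • v, smul_mem _ _ (mem_span_singleton_self v),
      sub_add_cancel z _⟩
  · rw [disjoint_def]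
    rintro _ ⟨-, hker⟩ hspan
    obtain ⟨c, rfl⟩ := mem_span_singleton.mp hspan
    have hc : c = 0 := by simpa [hfv] using hker
    rw [hc, zero_smul]

end Submodule

namespace Paper

variable {R : Type*} [CommRing R] {g : ℕ}

theorem two_mul_succ_pos (g : ℕ) : 0 < 2 * (g + 1) := by omega

theorem one_lt_two_mul_succ (g : ℕ) : 1 < 2 * (g + 1) := by omega

theorem symp_sub_left (x y a : Fin (2 * g) → R) : symp (x - y) a = symp x a - symp y a := by
  rw [sub_eq_add_neg, ← neg_one_smul R y, symp_add_left, symp_smul_left]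
  ring

theorem symp_antisymm (x y : Fin (2 * g) → R) : symp x y = - symp y x := by
  unfold symp
  rw [← Finset.sum_neg_distrib]
  exact Finset.sum_congr rfl fun i _ => by ring

theorem symp_stdB_right (z : Fin (2 * g) → R) {i : ℕ} (hi : i < g) :
    symp z (stdB R g i) = z ⟨2 * i, by omega⟩ := by
  unfold symp stdB
  rw [Finset.sum_eq_single ⟨i, hi⟩]
  · simp
  · intro j _ hj
    have hji : j.1 ≠ i := fun h => hj (Fin.ext h)
    rw [if_neg (by dsimp only; omega), if_neg (by dsimp only; omega)]
    ring
  · simp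

theorem symp_pr2_right {z : Fin (2 * g) → R} (hz : z ∈ coordZero R (2 * g) 2)
    (v : Fin (2 * g) → R) : symp z (pr2 v) = symp z v := by
  unfold symp pr2
  refine Finset.sum_congr rfl fun i _ => ?_
  rcases Nat.eq_zero_or_pos i.1 with hi | hi
  · simp only [hi, Nat.mul_zero, Nat.zero_add]
    rw [hz _ (by simp), hz _ (by simp)]
    ring
  · rw [if_neg (by dsimp only; omega), if_neg (by dsimp only; omega)]

theorem mem_perp_insert {a : Fin (2 * g) → R} {A : Set (Fin (2 * g) → R)}
    {z : Fin (2 * g) → R} : z ∈ perp (insert a A) ↔ symp z a = 0 ∧ z ∈ perp A :=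
  Set.forall_mem_insert ..

theorem mem_perp_singleton {a z : Fin (2 * g) → R} : z ∈ perp {a} ↔ symp z a = 0 :=
  forall_eq

theorem mem_coordZero_two_iff {v : Fin (2 * (g + 1)) → R} :
    v ∈ coordZero R (2 * (g + 1)) 2 ↔
      v ⟨0, two_mul_succ_pos g⟩ = 0 ∧ v ⟨1, one_lt_two_mul_succ g⟩ = 0 := by
  refine ⟨fun hv => ⟨hv _ zero_lt_two, hv _ one_lt_two⟩, fun ⟨h0, h1⟩ j hj => ?_⟩
  obtain ⟨_ | _ | j, hj'⟩ := j
  exacts [h0, h1, by simp at hj]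

theorem perp_inf_ker_eq_perp_pr2_inf_coordZero (x x' : Fin (2 * (g + 1)) → R) :
    perp {x, x', stdB R (g + 1) 0} ⊓
        LinearMap.ker (LinearMap.proj (R := R) ⟨1, one_lt_two_mul_succ g⟩) =
      perp {pr2 x, pr2 x'} ⊓ coordZero R (2 * (g + 1)) 2 := by
  ext z
  simp only [Submodule.mem_inf, mem_perp_insert, mem_perp_singleton, LinearMap.mem_ker,
    LinearMap.proj_apply, symp_stdB_right z (Nat.succ_pos g)]
  constructor
  · rintro ⟨⟨hx, hx', ha₁⟩, hb₁⟩
    have hz : z ∈ coordZero R (2 * (g + 1)) 2 := mem_coordZero_two_iff.mpr ⟨ha₁, hb₁⟩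
    exact ⟨⟨(symp_pr2_right hz x).trans hx, (symp_pr2_right hz x').trans hx'⟩, hz⟩
  · rintro ⟨⟨hx, hx'⟩, hz⟩
    exact ⟨⟨(symp_pr2_right hz x).symm.trans hx, (symp_pr2_right hz x').symm.trans hx',
      (mem_coordZero_two_iff.mp hz).1⟩, (mem_coordZero_two_iff.mp hz).2⟩

theorem symp_stdB_sub_left (u y : Fin (2 * (g + 1)) → R) :
    symp (stdB R (g + 1) 0 - u) y = symp y u - y ⟨0, two_mul_succ_pos g⟩ := by
  rw [symp_sub_left, symp_antisymm, symp_stdB_right y (Nat.succ_pos g), symp_antisymm u]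
  ring

theorem stdB_sub_mem_perp {x x' u : Fin (2 * (g + 1)) → R}
    (hxa : x ⟨0, two_mul_succ_pos g⟩ = 1) (hx'a : x' ⟨0, two_mul_succ_pos g⟩ = 1)
    (hu : u ⟨0, two_mul_succ_pos g⟩ = 0) (hux : symp x u = 1) (hux' : symp x' u = 1) :
    stdB R (g + 1) 0 - u ∈ perp {x, x', stdB R (g + 1) 0} := by
  simp only [mem_perp_insert, mem_perp_singleton, symp_stdB_sub_left, hxa, hx'a, hux, hux',
    symp_stdB_right _ (Nat.succ_pos g)]
  refine ⟨sub_self 1, sub_self 1, ?_⟩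
  show stdB R (g + 1) 0 ⟨0, _⟩ - u ⟨0, _⟩ = 0
  rw [hu, sub_zero]
  exact if_neg zero_ne_one

/-- the decomposition `⟨x,x',b_1⟩^⊥ = pr₂(⟨pr₂x,pr₂x'⟩^⊥ ∩ H₂) ⊕ ℚ(b_1 - u)`. -/
theorem stmt17 (g : ℕ) (x x' : Fin (2 * (g + 1)) → ℚ)
    (hxa : x ⟨0, by omega⟩ = 1) (hx'a : x' ⟨0, by omega⟩ = 1)
    (u : Fin (2 * (g + 1)) → ℚ) (hu : u ∈ coordZero ℚ (2 * (g + 1)) 2)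
    (hux : symp x u = 1) (hux' : symp x' u = 1) :
    perp {x, x', stdB ℚ (g + 1) 0} =
      (perp {pr2 x, pr2 x'} ⊓ coordZero ℚ (2 * (g + 1)) 2) ⊔
        Submodule.span ℚ {stdB ℚ (g + 1) 0 - u} ∧
    Disjoint (perp {pr2 x, pr2 x'} ⊓ coordZero ℚ (2 * (g + 1)) 2)
      (Submodule.span ℚ {stdB ℚ (g + 1) 0 - u}) := by
  obtain ⟨hu0, hu1⟩ := mem_coordZero_two_iff.mp hu
  rw [← perp_inf_ker_eq_perp_pr2_inf_coordZero]
  refine Submodule.eq_inf_ker_sup_span_singleton_and_disjoint _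
    (stdB_sub_mem_perp hxa hx'a hu0 hux hux') ?_
  show stdB ℚ (g + 1) 0 ⟨1, _⟩ - u ⟨1, _⟩ = 1
  rw [hu1, sub_zero]
  exact if_pos rfl

end Paper
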